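/- Let ψ ≥ 2 be a natural number. In the ψ×ψ grid graph, the worst-case swap count for bringing two qubit states adjacent equals exactly 2ψ − 3. Precisely: (i) for every pair of distinct vertices a, b there exists a composition σ of at most 2ψ − 3 adjacent transpositions with σ(a) adjacent to σ(b); and (ii) for the opposite corner vertices a = (0,0) and b = (ψ−1, ψ−1), every composition σ of k adjacent transpositions with σ(a) adjacent to σ(b) satisfies k ≥ 2ψ − 3. -/

import Mathlib

/-- The ψ×ψ grid graph on `Fin ψ × Fin ψ`: two vertices are adjacent iff their
L1 distance (sum of absolute differences of coordinates, as naturals) is 1. -/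
def gridGraph (ψ : ℕ) : SimpleGraph (Fin ψ × Fin ψ) where
  Adj u v := Nat.dist u.1.val v.1.val + Nat.dist u.2.val v.2.val = 1
  symm := by
    constructor
    intro u v h
    simpa [Nat.dist_comm] using h
  loopless := by
    constructor
    intro u h
    simp [Nat.dist_self] at h

/-! An adjacent swap changes the graph distance between the positions of two tokens by at most
one: it moves at most one of them, by one edge, unless it exchanges them. Hence bringing `a` and
`b` adjacent takes at least `dist a b - 1` swaps, and dragging `a` along a shortest path to `b`
achieves this. The grid is the box product of two paths, so its distance is the L1 distance,
whose maximum `2ψ - 2` is attained at opposite corners. -/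

open SimpleGraph Equiv

def swapPerm {α : Type*} [DecidableEq α] (L : List (α × α)) : Perm α :=
  (L.map fun p => swap p.1 p.2).prod

@[simp]
lemma swapPerm_nil {α : Type*} [DecidableEq α] : swapPerm ([] : List (α × α)) = 1 := rfl

@[simp]
lemma swapPerm_cons {α : Type*} [DecidableEq α] (p : α × α) (L : List (α × α)) :
    swapPerm (p :: L) = swap p.1 p.2 * swapPerm L := rfl

lemma swapPerm_append_singleton {α : Type*} [DecidableEq α] (L : List (α × α)) (p : α × α) :
    swapPerm (L ++ [p]) = swapPerm L * swap p.1 p.2 := by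
  simp [swapPerm]

namespace SimpleGraph

variable {V : Type*} [DecidableEq V] {G : SimpleGraph V}

lemma edist_swap_le_one {u v : V} (huv : G.Adj u v) (z : V) : G.edist z (swap u v z) ≤ 1 := by
  rw [edist_le_one_iff_adj_or_eq]
  rcases eq_or_ne z u with rfl | hu
  · simp [huv]
  rcases eq_or_ne z v with rfl | hv
  · simp [huv.symm]
  simp [swap_apply_of_ne_of_ne hu hv]

lemma edist_le_edist_swap_add_one {u v : V} (huv : G.Adj u v) (x y : V) :
    G.edist x y ≤ G.edist (swap u v x) (swap u v y) + 1 := by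
  by_cases hx : swap u v x = x
  · calc G.edist x y ≤ G.edist x (swap u v y) + G.edist (swap u v y) y := G.edist_triangle
      _ ≤ G.edist (swap u v x) (swap u v y) + 1 := by
        rw [hx, edist_comm (u := swap u v y)]
        gcongr
        exact edist_swap_le_one huv y
  by_cases hy : swap u v y = y
  · calc G.edist x y ≤ G.edist x (swap u v x) + G.edist (swap u v x) y := G.edist_triangle
      _ ≤ G.edist (swap u v x) (swap u v y) + 1 := by
        rw [hy, add_comm]
        gcongr
        exact edist_swap_le_one huv x
  have hx' : x = u ∨ x = v := by
    by_contra! h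
    exact hx (swap_apply_of_ne_of_ne h.1 h.2)
  have hy' : y = u ∨ y = v := by
    by_contra! h
    exact hy (swap_apply_of_ne_of_ne h.1 h.2)
  rcases hx' with rfl | rfl <;> rcases hy' with rfl | rfl <;> simp [edist_comm]

lemma edist_le_edist_swapPerm_add_length (L : List (V × V)) (hL : ∀ p ∈ L, G.Adj p.1 p.2)
    (x y : V) : G.edist x y ≤ G.edist (swapPerm L x) (swapPerm L y) + L.length := by
  induction L with
  | nil => simp
  | cons p L ih =>
    calc G.edist x y ≤ G.edist (swapPerm L x) (swapPerm L y) + L.length :=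
          ih fun q hq => hL q (List.mem_cons_of_mem p hq)
      _ ≤ G.edist (swapPerm (p :: L) x) (swapPerm (p :: L) y) + 1 + L.length := by
          gcongr
          exact edist_le_edist_swap_add_one (hL p List.mem_cons_self) _ _
      _ = _ := by simp only [List.length_cons]; push_cast; ring

lemma edist_le_length_add_one_of_adj_swapPerm {L : List (V × V)} (hL : ∀ p ∈ L, G.Adj p.1 p.2)
    {a b : V} (hab : G.Adj (swapPerm L a) (swapPerm L b)) : G.edist a b ≤ L.length + 1 := by
  simpa [edist_eq_one_iff_adj.2 hab, add_comm] using edist_le_edist_swapPerm_add_length L hL a b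

lemma Walk.exists_swapPerm_adj {a b : V} (p : G.Walk a b) (hab : a ≠ b) :
    ∃ L : List (V × V), L.length + 1 ≤ p.length ∧ (∀ q ∈ L, G.Adj q.1 q.2) ∧
      G.Adj (swapPerm L a) (swapPerm L b) := by
  induction p with
  | nil => exact absurd rfl hab
  | @cons u v w huv p ih =>
    by_cases hvw : v = w
    · subst hvw
      exact ⟨[], by simp, by simp, by simpa using huv⟩
    obtain ⟨L, hlen, hL, hadj⟩ := ih hvw
    refine ⟨L ++ [(u, v)], by simpa using hlen, ?_, ?_⟩
    · simp only [List.mem_append, List.mem_singleton]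
      rintro q (hq | rfl)
      exacts [hL q hq, huv]
    · simpa [swapPerm_append_singleton, swap_apply_of_ne_of_ne (Ne.symm hab) (Ne.symm hvw)]
        using hadj

lemma pathGraph_exists_adj_dist_succ {n : ℕ} {u v : Fin n} (huv : u ≠ v) :
    ∃ w, (pathGraph n).Adj u w ∧ Nat.dist w v + 1 = Nat.dist u v := by
  have := Fin.val_ne_of_ne huv
  rcases Nat.lt_or_gt_of_ne this with h | h
  · exact ⟨⟨u + 1, by omega⟩, by simp [pathGraph_adj], by simp only [Nat.dist]; omega⟩
  · exact ⟨⟨u - 1, by omega⟩, by simp [pathGraph_adj]; omega, by simp only [Nat.dist]; omega⟩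

lemma pathGraph_edist_le {n : ℕ} (u v : Fin n) : (pathGraph n).edist u v ≤ Nat.dist u v := by
  induction hd : Nat.dist u v generalizing u with
  | zero => simp [Fin.ext (Nat.eq_of_dist_eq_zero hd)]
  | succ d ih =>
    obtain ⟨w, huw, hw⟩ := pathGraph_exists_adj_dist_succ (u := u) (v := v) (by rintro rfl; simp at hd)
    calc (pathGraph n).edist u v ≤ (pathGraph n).edist u w + (pathGraph n).edist w v :=
          SimpleGraph.edist_triangle
      _ ≤ 1 + d := add_le_add (edist_eq_one_iff_adj.2 huw).le (ih w (by omega))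
      _ = (d + 1 : ℕ) := by push_cast; ring

lemma Walk.dist_val_le_length {n : ℕ} {u v : Fin n} (p : (pathGraph n).Walk u v) :
    Nat.dist u v ≤ p.length := by
  induction p with
  | nil => simp
  | @cons u w v huw p ih =>
    have : Nat.dist u w = 1 := by
      rw [pathGraph_adj] at huw
      simp only [Nat.dist]; omega
    have := Nat.dist.triangle_inequality u w v
    simp only [Walk.length_cons]; omega

lemma pathGraph_edist {n : ℕ} (u v : Fin n) : (pathGraph n).edist u v = Nat.dist u v :=
  le_antisymm (pathGraph_edist_le u v) (le_iInf fun p => by exact_mod_cast p.dist_val_le_length)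

end SimpleGraph

lemma gridGraph_eq_boxProd (ψ : ℕ) : gridGraph ψ = pathGraph ψ □ pathGraph ψ := by
  ext a b
  simp only [gridGraph, boxProd_adj, pathGraph_adj, Fin.ext_iff, Nat.dist]
  omega

lemma gridGraph_edist {ψ : ℕ} (a b : Fin ψ × Fin ψ) :
    (gridGraph ψ).edist a b = (Nat.dist a.1 b.1 + Nat.dist a.2 b.2 : ℕ) := by
  rw [gridGraph_eq_boxProd, edist_boxProd, pathGraph_edist, pathGraph_edist, Nat.cast_add]

/-- For ψ ≥ 2, the worst-case number of adjacent transpositions (swap gates)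
needed to bring two qubit states adjacent on the ψ×ψ grid is exactly 2ψ − 3:
(i) any two distinct vertices can be brought adjacent by a composition of at
most 2ψ − 3 adjacent transpositions, and (ii) for the opposite corners
(0,0) and (ψ−1,ψ−1), every composition of `k` adjacent transpositions bringing
them adjacent satisfies `k ≥ 2ψ − 3`. -/
theorem gridGraph_worst_case_swaps (ψ : ℕ) (hψ : 2 ≤ ψ) :
    (∀ a b : Fin ψ × Fin ψ, a ≠ b →
      ∃ L : List ((Fin ψ × Fin ψ) × (Fin ψ × Fin ψ)),
        L.length ≤ 2 * ψ - 3 ∧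
        (∀ p ∈ L, (gridGraph ψ).Adj p.1 p.2) ∧
        (gridGraph ψ).Adj ((L.map fun p => Equiv.swap p.1 p.2).prod a)
          ((L.map fun p => Equiv.swap p.1 p.2).prod b)) ∧
    (∀ (k : ℕ) (L : List ((Fin ψ × Fin ψ) × (Fin ψ × Fin ψ))),
      L.length = k →
      (∀ p ∈ L, (gridGraph ψ).Adj p.1 p.2) →
      (gridGraph ψ).Adj
        ((L.map fun p => Equiv.swap p.1 p.2).prod
          (⟨0, by omega⟩, ⟨0, by omega⟩))
        ((L.map fun p => Equiv.swap p.1 p.2).prod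
          (⟨ψ - 1, by omega⟩, ⟨ψ - 1, by omega⟩)) →
      k ≥ 2 * ψ - 3) := by
  refine ⟨fun a b hab => ?_, fun k L hk hL hadj => ?_⟩
  · have hreach : (gridGraph ψ).edist a b ≠ ⊤ := by simp [gridGraph_edist]
    obtain ⟨p, hp⟩ := exists_walk_of_edist_ne_top hreach
    obtain ⟨L, hlen, hL, hadj⟩ := p.exists_swapPerm_adj hab
    refine ⟨L, ?_, hL, hadj⟩
    have hp : p.length = Nat.dist a.1 b.1 + Nat.dist a.2 b.2 := by
      exact_mod_cast hp.trans (gridGraph_edist a b)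
    have := a.1.isLt; have := a.2.isLt; have := b.1.isLt; have := b.2.isLt
    simp only [Nat.dist] at hp
    omega
  · have h := edist_le_length_add_one_of_adj_swapPerm hL hadj
    rw [gridGraph_edist] at h
    have h' : Nat.dist 0 (ψ - 1) + Nat.dist 0 (ψ - 1) ≤ L.length + 1 := by exact_mod_cast h
    simp only [Nat.dist] at h'
    omega
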